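/- arXiv:1806.10153 — 4 statements merged into one kernel-verified Lean document; each statement's English description precedes it below -/
import Mathlib

section
/- Let X and Y be Hausdorff topological spaces with Cantor–Bendixson ranks rank_CB(X) = n+1 and rank_CB(Y) = m+1 for natural numbers m, n. Then the Cantor–Bendixson rank of the product space X × Y equals m + n + 1, i.e. rank_CB(X × Y) = rank_CB(X) + rank_CB(Y) − 1. -/
/-- The Cantor–Bendixson derivative of a set `A`: the set of points of `A` that are not
isolated in the subspace `A`, i.e. the points of `A` that are accumulation points of `A`. -/
def cbDeriv {X : Type*} [TopologicalSpace X] (A : Set X) : Set X :=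
  {x ∈ A | AccPt x (Filter.principal A)}

/-- The finite Cantor–Bendixson derivatives of the space: `cbIter X k = X^(k)`,
obtained by iterating the Cantor–Bendixson derivative `k` times starting from `X^(0) = X`. -/
def cbIter (X : Type*) [TopologicalSpace X] (k : ℕ) : Set X :=
  cbDeriv^[k] Set.univ

/-- `X` has Cantor–Bendixson rank equal to the (finite) ordinal `k`: the Cantor–Bendixson
process stabilises at stage `k` (hence at every later stage, finite or transfinite, since the
derivative is a fixed operation and the stages are decreasing) and at no earlier stage. -/
def cbRankEq (X : Type*) [TopologicalSpace X] (k : ℕ) : Prop :=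
  cbIter X (k + 1) = cbIter X k ∧ ∀ j < k, cbIter X (j + 1) ≠ cbIter X j

/-!
In a T1 space every stage `X^(k)` is closed, so the Cantor–Bendixson derivative of a stage is
its derived set. Derived sets commute with finite unions and satisfy
`(A × B)' = A' × closure B ∪ closure A × B'`, whence by induction
`(X × Y)^(k) = ⋃_{i + j = k} X^(i) × Y^(j)`. So if `x` leaves the process at stage `n` and `y`
at stage `m`, then `(x, y)` leaves it at stage `n + m`; and once `X` is stable from `n + 1` and
`Y` from `m + 1`, the product is stable from `n + m + 1`, since `i + j = n + m + 1` forces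
`i > n` or `j > m`.
-/

open Filter Set Topology Finset.HasAntidiagonal

section DerivedSet

variable {X Y : Type*} [TopologicalSpace X] [TopologicalSpace Y]

lemma derivedSet_biUnion_finset {ι : Type*} (s : Finset ι) (A : ι → Set X) :
    derivedSet (⋃ i ∈ s, A i) = ⋃ i ∈ s, derivedSet (A i) := by
  ext x
  simp [accPt_iff_frequently, ← s.frequently_exists, and_left_comm]

lemma accPt_prod_iff {x : X} {y : Y} {A : Set X} {B : Set Y} :
    AccPt (x, y) (𝓟 (A ×ˢ B)) ↔
      AccPt x (𝓟 A) ∧ ClusterPt y (𝓟 B) ∨ ClusterPt x (𝓟 A) ∧ AccPt y (𝓟 B) := by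
  have hne : ({(x, y)}ᶜ : Set (X × Y)) = {x}ᶜ ×ˢ univ ∪ univ ×ˢ {y}ᶜ := by
    ext p
    simp [Prod.ext_iff, or_iff_not_imp_left]
  have : 𝓝[≠] (x, y) ⊓ 𝓟 (A ×ˢ B) =
      (𝓝 x ⊓ 𝓟 {x}ᶜ ⊓ 𝓟 A) ×ˢ (𝓝 y ⊓ 𝓟 B) ⊔ (𝓝 x ⊓ 𝓟 A) ×ˢ (𝓝 y ⊓ 𝓟 {y}ᶜ ⊓ 𝓟 B) := by
    rw [nhdsWithin, nhds_prod_eq, hne, ← sup_principal, ← prod_principal_principal,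
      ← prod_principal_principal, ← prod_principal_principal, inf_sup_left, inf_sup_right,
      prod_inf_prod, prod_inf_prod, prod_inf_prod, prod_inf_prod]
    simp [principal_univ]
  rw [AccPt, this, sup_neBot, prod_neBot, prod_neBot]
  rfl

lemma derivedSet_prod (A : Set X) (B : Set Y) :
    derivedSet (A ×ˢ B) = derivedSet A ×ˢ closure B ∪ closure A ×ˢ derivedSet B := by
  ext ⟨x, y⟩
  simp [mem_derivedSet, accPt_prod_iff, mem_closure_iff_clusterPt]

end DerivedSet

section CantorBendixson

variable {X Y : Type*} [TopologicalSpace X] [TopologicalSpace Y]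

lemma cbDeriv_subset (A : Set X) : cbDeriv A ⊆ A := sep_subset _ _

lemma cbDeriv_eq_derivedSet {A : Set X} (hA : IsClosed A) : cbDeriv A = derivedSet A :=
  sep_eq_of_subset fun _ hx => hA.closure_subset (derivedSet_subset_closure A hx)

lemma cbIter_succ (k : ℕ) : cbIter X (k + 1) = cbDeriv (cbIter X k) :=
  Function.iterate_succ_apply' _ _ _

lemma cbIter_antitone : Antitone (cbIter X) :=
  antitone_nat_of_succ_le fun k => (cbIter_succ k).trans_subset (cbDeriv_subset _)

lemma cbIter_succ_eq_of_le {k i : ℕ} (h : cbIter X (k + 1) = cbIter X k) (hki : k ≤ i) :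
    cbIter X (i + 1) = cbIter X i := by
  obtain ⟨d, rfl⟩ := exists_add_of_le hki
  have hfix : cbIter X (k + d) = cbIter X k := by
    rw [cbIter, add_comm, Function.iterate_add_apply, ← cbIter,
      Function.iterate_fixed ((cbIter_succ k).symm.trans h)]
  rw [cbIter_succ, hfix, ← cbIter_succ, h]

lemma cbRankEq_succ_iff (k : ℕ) :
    cbRankEq X (k + 1) ↔
      cbIter X (k + 1 + 1) = cbIter X (k + 1) ∧ (cbIter X k \ cbIter X (k + 1)).Nonempty := by
  refine and_congr_right fun _ => ⟨fun h => ?_, fun h j hj hj' => ?_⟩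
  · exact sdiff_nonempty.2 fun hsub =>
      h k k.lt_succ_self (hsub.antisymm' (cbIter_antitone k.le_succ))
  · obtain ⟨x, hx, hx'⟩ := h
    exact hx' (cbIter_succ_eq_of_le hj' (Nat.le_of_lt_succ hj) ▸ hx)

variable [T1Space X]

lemma isClosed_cbIter (k : ℕ) : IsClosed (cbIter X k) := by
  induction k with
  | zero => exact isClosed_univ
  | succ k ih => rw [cbIter_succ, cbDeriv_eq_derivedSet ih]; exact isClosed_derivedSet _

lemma cbIter_succ_eq_derivedSet (k : ℕ) : cbIter X (k + 1) = derivedSet (cbIter X k) := by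
  rw [cbIter_succ, cbDeriv_eq_derivedSet (isClosed_cbIter k)]

variable [T1Space Y]

lemma cbIter_prod (k : ℕ) :
    cbIter (X × Y) k = ⋃ p ∈ antidiagonal k, cbIter X p.1 ×ˢ cbIter Y p.2 := by
  induction k with
  | zero => simp [cbIter]
  | succ k ih =>
    rw [cbIter_succ_eq_derivedSet, ih, derivedSet_biUnion_finset]
    simp_rw [derivedSet_prod, (isClosed_cbIter _).closure_eq, ← cbIter_succ_eq_derivedSet]
    ext ⟨x, y⟩
    simp only [mem_iUnion, mem_union, mem_prod, Finset.HasAntidiagonal.mem_antidiagonal,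
      Prod.exists, exists_prop]
    constructor
    · rintro ⟨i, j, rfl, ⟨hx, hy⟩ | ⟨hx, hy⟩⟩
      exacts [⟨i + 1, j, by omega, hx, hy⟩, ⟨i, j + 1, by omega, hx, hy⟩]
    · rintro ⟨_ | i, j, hij, hx, hy⟩
      exacts [⟨0, k, by omega, .inr ⟨hx, by rwa [← hij, zero_add]⟩⟩,
        ⟨i, j, by omega, .inl ⟨hx, hy⟩⟩]

lemma mem_cbIter_prod_iff {k : ℕ} {x : X} {y : Y} :
    (x, y) ∈ cbIter (X × Y) k ↔ ∃ i j, i + j = k ∧ x ∈ cbIter X i ∧ y ∈ cbIter Y j := by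
  simp [cbIter_prod, and_left_comm]

lemma cbIter_prod_succ_eq {a b : ℕ} (hX : cbIter X (a + 1 + 1) = cbIter X (a + 1))
    (hY : cbIter Y (b + 1 + 1) = cbIter Y (b + 1)) :
    cbIter (X × Y) (a + b + 1 + 1) = cbIter (X × Y) (a + b + 1) := by
  refine (cbIter_antitone (Nat.le_succ _)).antisymm fun ⟨x, y⟩ hxy => ?_
  obtain ⟨i, j, hij, hx, hy⟩ := mem_cbIter_prod_iff.1 hxy
  rw [mem_cbIter_prod_iff]
  rcases le_or_gt (a + 1) i with hi | hi
  · exact ⟨i + 1, j, by omega, by rwa [cbIter_succ_eq_of_le hX hi], hy⟩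
  · exact ⟨i, j + 1, by omega, hx, by rwa [cbIter_succ_eq_of_le hY (by omega)]⟩

lemma mk_mem_cbIter_prod_diff {a b : ℕ} {x : X} {y : Y}
    (hx : x ∈ cbIter X a \ cbIter X (a + 1)) (hy : y ∈ cbIter Y b \ cbIter Y (b + 1)) :
    (x, y) ∈ cbIter (X × Y) (a + b) \ cbIter (X × Y) (a + b + 1) := by
  refine ⟨mem_cbIter_prod_iff.2 ⟨a, b, rfl, hx.1, hy.1⟩, fun hxy => ?_⟩
  obtain ⟨i, j, hij, hxi, hyj⟩ := mem_cbIter_prod_iff.1 hxy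
  rcases le_or_gt (a + 1) i with hi | hi
  · exact hx.2 (cbIter_antitone hi hxi)
  · exact hy.2 (cbIter_antitone (by omega) hyj)

end CantorBendixson

/-- If `X` and `Y` are Hausdorff spaces with Cantor–Bendixson ranks `n+1`
and `m+1`, then the product `X × Y` has Cantor–Bendixson rank `n + m + 1`
(that is, `rank_CB(X) + rank_CB(Y) − 1`). -/
theorem stmt0 {X Y : Type*} [TopologicalSpace X] [T2Space X]
    [TopologicalSpace Y] [T2Space Y] (n m : ℕ)
    (hX : cbRankEq X (n + 1)) (hY : cbRankEq Y (m + 1)) :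
    cbRankEq (X × Y) (n + m + 1) := by
  rw [cbRankEq_succ_iff] at hX hY ⊢
  obtain ⟨hXs, x, hx⟩ := hX
  obtain ⟨hYs, y, hy⟩ := hY
  exact ⟨cbIter_prod_succ_eq hXs hYs, (x, y), mk_mem_cbIter_prod_diff hx hy⟩
end

section
/- Let X be a topological space and F a sheaf of ℚ-modules on X. Then for every natural number k, the k-th term C^k(F) of the Godement resolution of F is an injective object in the abelian category of sheaves of ℚ-modules on X. In particular C^0(F) = ∏_{y∈X} ι_y(F_y), a product of skyscraper sheaves on the stalks of F, is injective. -/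
open CategoryTheory CategoryTheory.Limits TopCat TopologicalSpace Opposite

attribute [local instance] Classical.propDecidable

noncomputable section

/-- The abelian category of sheaves of `ℚ`-modules on the topological space `X`. -/
abbrev SheafQ (X : TopCat.{0}) : Type 1 :=
  Sheaf (Opens.grothendieckTopology X) (ModuleCat.{0} ℚ)

variable (X : TopCat.{0})

/-- The skyscraper sheaf `ι_x(M)` at the point `x` with value the `ℚ`-module `M`. -/
def skyQ (x : X) (M : ModuleCat.{0} ℚ) : SheafQ X := skyscraperSheaf x M

/-- The stalk `F_x` of a sheaf of `ℚ`-modules at a point `x`. -/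
def stalkAt (F : SheafQ X) (x : X) : ModuleCat.{0} ℚ := TopCat.Presheaf.stalk F.val x

/-- The zeroth term of the Godement resolution: `C^0(F) = ∏_{y ∈ X} ι_y(F_y)`, the product
of the skyscraper sheaves on the stalks of `F`. -/
def godC0 (F : SheafQ X) : SheafQ X := ∏ᶜ fun y : X => skyQ X y (stalkAt X F y)

/-- The canonical monomorphism `δ_0 : F ⟶ C^0(F)` sending a section to its family of germs;
its component at `y` is the unit of the adjunction (stalk at `y`) ⊣ (skyscraper at `y`). -/
def godDelta0 (F : SheafQ X) : F ⟶ godC0 X F :=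
  Limits.Pi.lift fun y : X => (stalkSkyscraperSheafAdjunction y).unit.app F

/-- The cokernel sequence of the Godement resolution: `godCoker F 0 = F` and
`godCoker F (k+1) = coker (δ : godCoker F k ⟶ C^0(godCoker F k))`, i.e. `coker δ_k`. -/
def godCoker (F : SheafQ X) : ℕ → SheafQ X
  | 0 => F
  | k + 1 => cokernel (godDelta0 X (godCoker F k))

/-- The `k`-th term of the Godement resolution of `F`: `C^k(F) = C^0(coker δ_{k-1})`. -/
def godC (F : SheafQ X) (k : ℕ) : SheafQ X := godC0 X (godCoker X F k)


/-- Every `ℚ`-module satisfies Baer's criterion, since the only ideals of `ℚ` are `⊥` and `⊤`. -/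
lemma baer_rat (M : Type) [AddCommGroup M] [Module ℚ M] : Module.Baer ℚ M := by
  intro I g
  rcases I.eq_bot_or_top with rfl | rfl
  · refine ⟨0, fun x hx => ?_⟩
    obtain rfl : x = 0 := (Submodule.mem_bot ℚ).mp hx
    exact (map_zero g).symm
  · exact ⟨g ∘ₗ LinearMap.codRestrict ⊤ LinearMap.id (fun x => trivial),
      fun x hx => rfl⟩

instance moduleCatQ_injective (M : ModuleCat.{0} ℚ) : Injective M := by
  have : Module.Injective ℚ M := (baer_rat M).injective
  exact Module.injective_object_of_injective_module (R := ℚ) (M := M)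

instance skyQ_injective (x : X) (M : ModuleCat.{0} ℚ) : Injective (skyQ X x M) :=
  Injective.injective_of_adjoint (stalkSkyscraperSheafAdjunction x) M

/-- For any topological space `X` and any sheaf `F` of `ℚ`-modules on `X`,
every term `C^k(F)` of the Godement resolution of `F` is an injective object of the abelian
category of sheaves of `ℚ`-modules on `X`; in particular `C^0(F) = ∏_{y ∈ X} ι_y(F_y)`, the
product of skyscraper sheaves on the stalks of `F`, is injective. -/
theorem stmt5 (F : SheafQ X) :
    (∀ k : ℕ, Injective (godC X F k)) ∧
      Injective (∏ᶜ fun y : X => skyQ X y (stalkAt X F y)) := by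
  constructor
  · intro k
    exact (inferInstance : Injective (∏ᶜ fun y : X => skyQ X y (stalkAt X (godCoker X F k) y)))
  · infer_instance

end
end

section
/- Let X be a nonempty Hausdorff scattered space and let k be a natural number with k ≤ rank_CB(X). Then for each point x ∈ X^(k), the stalk at x of coker δ_{k−1} in the Godement resolution of the constant sheaf cℚ is nonzero: (coker δ_{k−1})_x ≠ 0. Moreover, if X is any Hausdorff space with nonempty perfect hull, then for every natural number k and every x ∈ X^(k) one has (coker δ_{k−1})_x ≠ 0 (where coker δ_{−1} is understood as cℚ itself). -/
/-!
The stalks of `cℚ` are `ℚ ≠ 0`, since sheafification does not change stalks. For the inductive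
step, let `F` be a sheaf of `ℚ`-modules and `x` an accumulation point of the support of `F`.
Were `(coker δ)_x = 0`, the map `δ_x : F_x → C⁰(F)_x` would be onto. Pick the global section
of `C⁰(F) = ∏ ι_y(F_y)` whose component at `x` is `0` and whose component at every other point
of the support is nonzero. Near `x` it equals `δ(σ)` for a local section `σ` of `F`; so `σ` has
germ `0` at `x`, hence vanishes near `x`, although its germs at the nearby points of the
support are the chosen nonzero elements. As `X^(k+1)` consists of accumulation points of
`X^(k)`, induction on `k` gives the theorem.
-/

open CategoryTheory CategoryTheory.Limits TopCat TopologicalSpace Opposite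

attribute [local instance] Classical.propDecidable

noncomputable section

/-- A subset `S` of a topological space is scattered if every nonempty subset `T ⊆ S`
has a point that is isolated in `T`. -/
def IsScatteredSet {X : Type*} [TopologicalSpace X] (S : Set X) : Prop :=
  ∀ T ⊆ S, T.Nonempty → ∃ x ∈ T, ¬ AccPt x (Filter.principal T)

variable (X : TopCat.{0})

/-- The constant sheaf `cℚ` of `ℚ`-modules at `ℚ` on `X`. -/
def constQ : SheafQ X :=
  (constantSheaf (Opens.grothendieckTopology X) (ModuleCat.{0} ℚ)).obj (ModuleCat.of ℚ ℚ)

open scoped Topology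

universe v u

theorem TopCat.Presheaf.eventually_germ_eq {C : Type u} [Category.{v} C] [HasColimits.{v} C]
    {FC : C → C → Type*} {CC : C → Type v} [∀ X Y, FunLike (FC X Y) (CC X) (CC Y)]
    [ConcreteCategory.{v} C FC] [PreservesFilteredColimits (forget C)] {Y : TopCat.{v}}
    (F : Y.Presheaf C) {U V : Opens Y} {x : Y} {hxU : x ∈ U} {hxV : x ∈ V}
    {s : ToType (F.obj (op U))} {t : ToType (F.obj (op V))}
    (h : F.germ U x hxU s = F.germ V x hxV t) :
    ∀ᶠ y in 𝓝 x, ∀ (hyU : y ∈ U) (hyV : y ∈ V), F.germ U y hyU s = F.germ V y hyV t := by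
  obtain ⟨W, hxW, iU, iV, hW⟩ := F.germ_eq x hxU hxV s t h
  filter_upwards [W.isOpen.mem_nhds hxW] with y hyW hyU hyV
  rw [← F.germ_res_apply iU y hyW, hW, F.germ_res_apply]

theorem ModuleCat.not_isZero_iff_nontrivial {R : Type u} [Ring R] {M : ModuleCat.{v} R} :
    ¬ IsZero M ↔ Nontrivial M := by
  rw [ModuleCat.isZero_iff_subsingleton, not_subsingleton_iff_nontrivial]

namespace Godement

variable {X}

lemma not_isZero_stalk_const (x : X) :
    ¬ IsZero (Presheaf.stalk ((Functor.const (Opens X)ᵒᵖ).obj (ModuleCat.of ℚ ℚ)) x) := by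
  let P : Presheaf (ModuleCat.{0} ℚ) X := (Functor.const _).obj (ModuleCat.of ℚ ℚ)
  let ε : P.stalk x ⟶ ModuleCat.of ℚ ℚ := colimit.desc _
    ⟨ModuleCat.of ℚ ℚ, { app := fun _ => 𝟙 _, naturality := by intros; simp }⟩
  have hε : P.germ ⊤ x trivial ≫ ε = 𝟙 _ := colimit.ι_desc _ _
  rw [ModuleCat.not_isZero_iff_nontrivial]
  refine ⟨P.germ ⊤ x trivial (1 : ℚ), 0, fun h => one_ne_zero (α := ℚ) ?_⟩
  rw [← map_zero ε.hom, ← h]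
  exact (ConcreteCategory.congr_hom hε (1 : ℚ)).symm

theorem not_isZero_stalk_constQ (x : X) : ¬ IsZero (stalkAt X (constQ X) x) :=
  have := Presheaf.stalkFunctor_map_unit_toSheafify_isIso x (ModuleCat.{0} ℚ)
    ((Functor.const (Opens X)ᵒᵖ).obj (ModuleCat.of ℚ ℚ))
  fun h => not_isZero_stalk_const x (h.of_iso (@asIso _ _ _ _ _ this))

def godC0Component (F : SheafQ X) {U : Opens X} (y : X) (hy : y ∈ U) :
    (godC0 X F).obj.obj (op U) ⟶ stalkAt X F y :=
  (Pi.π (fun y => skyQ X y (stalkAt X F y)) y).hom.app (op U) ≫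
    eqToHom (show (skyQ X y (stalkAt X F y)).obj.obj (op U) = stalkAt X F y from if_pos hy)

lemma godC0_map_comp_godC0Component (F : SheafQ X) {U V : Opens X} (i : V ⟶ U) {y : X}
    (hyV : y ∈ V) (hyU : y ∈ U) :
    (godC0 X F).obj.map i.op ≫ godC0Component F y hyV = godC0Component F y hyU := by
  dsimp only [godC0Component, godC0]
  rw [← Category.assoc, NatTrans.naturality, Category.assoc]
  congr 1
  simp only [skyQ, skyscraperSheaf, skyscraperPresheaf_map, dif_pos hyV]
  exact eqToHom_trans _ _

lemma godDelta0_comp_godC0Component (F : SheafQ X) {U : Opens X} (y : X) (hy : y ∈ U) :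
    (godDelta0 X F).hom.app (op U) ≫ godC0Component F y hy = Presheaf.germ F.obj U y hy := by
  change (godDelta0 X F ≫ Pi.π _ y).hom.app (op U) ≫ eqToHom _ = _
  erw [godDelta0, Pi.lift_π, StalkSkyscraperPresheafAdjunctionAuxs.toSkyscraperPresheaf_app,
    dif_pos hy]
  exact (comp_eqToHom_iff _ _ _).mpr (by erw [Category.id_comp]; rfl)

lemma exists_godC0_section_godC0Component_eq (F : SheafQ X) (m : ∀ y, stalkAt X F y) :
    ∃ T : (godC0 X F).obj.obj (op ⊤), ∀ y, godC0Component F y (Opens.mem_top y) T = m y := by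
  let E := sheafToPresheaf (Opens.grothendieckTopology X) (ModuleCat.{0} ℚ) ⋙
    (evaluation _ _).obj (op ⊤)
  let fam := fun y => skyQ X y (stalkAt X F y)
  let t : ∀ y, E.obj (fam y) := fun y =>
    eqToHom (show stalkAt X F y = E.obj (fam y) from (if_pos (Opens.mem_top y)).symm) (m y)
  refine ⟨inv (piComparison E fam) (Concrete.productEquiv _ |>.symm t), fun y => ?_⟩
  have hπ := ConcreteCategory.congr_hom (piComparison_comp_π E fam y)
    (inv (piComparison E fam) (Concrete.productEquiv _ |>.symm t))
  simp only [ConcreteCategory.comp_apply, IsIso.inv_hom_id_apply,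
    Concrete.productEquiv_symm_apply_π] at hπ
  change (eqToHom _ : E.obj (fam y) ⟶ stalkAt X F y) (E.map (Pi.π fam y) _) = m y
  rw [← hπ, ← ConcreteCategory.comp_apply, eqToHom_trans, eqToHom_refl, ConcreteCategory.id_apply]

lemma surjective_stalk_map_of_isZero_stalk_cokernel {F G : SheafQ X} (f : F ⟶ G) (x : X)
    (h : IsZero (stalkAt X (cokernel f) x)) :
    Function.Surjective ((Presheaf.stalkFunctor _ x).map f.hom) := by
  let L := Sheaf.forget (ModuleCat.{0} ℚ) X ⋙ Presheaf.stalkFunctor _ x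
  have : PreservesColimits L := (stalkSkyscraperSheafAdjunction x).leftAdjoint_preservesColimits
  rw [← ModuleCat.epi_iff_surjective]
  exact Preadditive.epi_of_isZero_cokernel (L.map f) (h.of_iso (PreservesCokernel.iso L f).symm)

theorem eventually_isZero_stalk_of_isZero_stalk_cokernel_godDelta0 (F : SheafQ X) (x : X)
    (h : IsZero (stalkAt X (cokernel (godDelta0 X F)) x)) :
    ∀ᶠ y in 𝓝[≠] x, IsZero (stalkAt X F y) := by
  have hchoice : ∀ y, ∃ a : stalkAt X F y, ¬ IsZero (stalkAt X F y) → a ≠ 0 := fun y => by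
    by_cases hy : IsZero (stalkAt X F y)
    · exact ⟨0, absurd hy⟩
    · have := ModuleCat.not_isZero_iff_nontrivial.mp hy
      exact (exists_ne 0).imp fun _ ha _ => ha
  choose m hm using hchoice
  obtain ⟨T, hT⟩ := exists_godC0_section_godC0Component_eq F (Function.update m x 0)
  obtain ⟨s, hs⟩ := surjective_stalk_map_of_isZero_stalk_cokernel _ x h
    (Presheaf.germ (godC0 X F).obj ⊤ x (Opens.mem_top x) T)
  obtain ⟨V, hxV, σ, rfl⟩ := Presheaf.exists_germ_eq F.obj s
  rw [Presheaf.stalkFunctor_map_germ_apply] at hs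
  obtain ⟨W, hxW, iV, iT, hW⟩ := Presheaf.germ_eq _ x hxV (Opens.mem_top x) _ _ hs
  have hσ : ∀ y (hyW : y ∈ W),
      Presheaf.germ F.obj V y (iV.le hyW) σ = Function.update m x 0 y := by
    intro y hyW
    rw [← hT y, ← godDelta0_comp_godC0Component F y (iV.le hyW),
      ← godC0_map_comp_godC0Component F iV hyW, ← godC0_map_comp_godC0Component F iT hyW]
    change godC0Component F y hyW ((godC0 X F).obj.map iV.op ((godDelta0 X F).hom.app (op V) σ)) =
      godC0Component F y hyW ((godC0 X F).obj.map iT.op T)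
    rw [hW]
  have hσx : Presheaf.germ F.obj V x hxV σ = Presheaf.germ F.obj V x hxV 0 := by
    rw [hσ x hxW, Function.update_self, map_zero]
    rfl
  filter_upwards [eventually_nhdsWithin_of_eventually_nhds (W.isOpen.mem_nhds hxW),
    eventually_nhdsWithin_of_eventually_nhds (Presheaf.eventually_germ_eq _ hσx),
    self_mem_nhdsWithin] with y hyW hy0 hyx
  by_contra hy
  apply hm y hy
  rw [← Function.update_of_ne hyx 0 m, ← hσ y hyW, hy0 _ (iV.le hyW), map_zero]
  rfl

theorem not_isZero_stalk_cokernel_godDelta0 {F : SheafQ X} {S : Set X}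
    (hS : ∀ y ∈ S, ¬ IsZero (stalkAt X F y)) {x : X} (hx : AccPt x (Filter.principal S)) :
    ¬ IsZero (stalkAt X (cokernel (godDelta0 X F)) x) := fun h =>
  let ⟨y, hyS, hy⟩ := ((accPt_iff_frequently_nhdsNE.mp hx).and_eventually
    (eventually_isZero_stalk_of_isZero_stalk_cokernel_godDelta0 F x h)).exists
  hS y hyS hy

theorem not_isZero_stalk_godCoker_constQ (k : ℕ) (x : X) (hx : x ∈ cbIter X k) :
    ¬ IsZero (stalkAt X (godCoker X (constQ X) k) x) := by
  induction k generalizing x with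
  | zero => exact not_isZero_stalk_constQ x
  | succ k ih =>
    rw [cbIter, Function.iterate_succ_apply'] at hx
    exact not_isZero_stalk_cokernel_godDelta0 ih hx.2

end Godement

/-- (i) If `X` is a nonempty Hausdorff scattered space and `k` is a natural
number with `k ≤ rank_CB(X)` (i.e. the Cantor–Bendixson process has not stabilised before
stage `k`), then for each `x ∈ X^(k)` the stalk at `x` of `coker δ_{k-1}` in the Godement
resolution of the constant sheaf `cℚ` is nonzero.  (ii) If `X` is a Hausdorff space with a
nonempty perfect hull (equivalently, `X` contains a nonempty subset with no isolated points),
then the same conclusion holds for every natural number `k` and every `x ∈ X^(k)`.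
Here `coker δ_{-1}` is understood as `cℚ` itself. -/
theorem stmt8 :
    (∀ (X : TopCat.{0}) [T2Space X], (Set.univ : Set X).Nonempty →
      IsScatteredSet (Set.univ : Set X) →
      ∀ k : ℕ, (∀ j < k, cbIter X (j + 1) ≠ cbIter X j) →
      ∀ x ∈ cbIter X k, ¬ IsZero (stalkAt X (godCoker X (constQ X) k) x)) ∧
    (∀ (X : TopCat.{0}) [T2Space X], (∃ A : Set X, A.Nonempty ∧ Preperfect A) →
      ∀ k : ℕ, ∀ x ∈ cbIter X k, ¬ IsZero (stalkAt X (godCoker X (constQ X) k) x)) :=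
  ⟨fun _ _ _ _ k _ => Godement.not_isZero_stalk_godCoker_constQ k,
    fun _ _ _ k => Godement.not_isZero_stalk_godCoker_constQ k⟩

end
end

section
/- Let X be a Hausdorff scattered space with finite Cantor–Bendixson rank n (so X^(n) = ∅). Then the injective dimension of the abelian category of sheaves of ℚ-modules on X is at most n − 1: every sheaf of ℚ-modules on X admits an injective resolution of length at most n − 1. -/
/-!
Every sheaf `F` of modules over a semisimple ring embeds into the injective sheaf
`∏ₓ skyscraper_x(F_x)`. If the stalks of `F` vanish outside a closed set `S` and `x` has a
neighbourhood meeting `S` at most in `x`, then near `x` only the factor at `x` of the product is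
nonzero, so the embedding is an isomorphism on stalks at `x`. Hence the cokernel has its stalks
supported on the Cantor–Bendixson derivative of `S`, which is again closed. Starting from `S = X`,
after `n` steps the support is `X^(n) = ∅` and the sheaf is zero; splicing the `n` short exact
sequences gives an injective resolution with `Iᵏ = 0` for `k ≥ n`.
-/

open CategoryTheory CategoryTheory.Limits TopCat TopologicalSpace Opposite

attribute [local instance] Classical.propDecidable

noncomputable section

namespace CategoryTheory.InjectiveResolution

variable {C : Type*} [Category C] [Abelian C]

def ofExact {Z : C} (K : CochainComplex C ℕ) (injective : ∀ n, Injective (K.X n))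
    (f : Z ⟶ K.X 0) (hf : f ≫ K.d 0 1 = 0) [Mono f]
    (exact₀ : (ShortComplex.mk f (K.d 0 1) hf).Exact)
    (exactAt_succ : ∀ n, K.ExactAt (n + 1)) : InjectiveResolution Z where
  cocomplex := K
  injective := injective
  ι := (CochainComplex.fromSingle₀Equiv K Z).symm ⟨f, hf⟩
  quasiIso := ⟨fun
    | 0 => by
      rw [CochainComplex.quasiIsoAt₀_iff, ShortComplex.quasiIso_iff_of_zeros]
      · refine (ShortComplex.exact_and_mono_f_iff_of_iso ?_).2 ⟨exact₀, ‹_›⟩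
        refine ShortComplex.isoMk (Iso.refl _) (Iso.refl _) (Iso.refl _) ?_ ?_
        · exact (Category.id_comp f).trans
            ((CochainComplex.fromSingle₀Equiv_symm_apply_f_zero f hf).symm.trans
              (Category.comp_id _).symm)
        · exact (Category.id_comp _).trans (Category.comp_id _).symm
      exacts [rfl, rfl, K.shape 0 0 (by simp)]
    | n + 1 => (quasiIsoAt_iff_exactAt _ _ (CochainComplex.exactAt_succ_single_obj _ _)).2
        (exactAt_succ n)⟩

/-- `I.ι.f 0`, typed with source `Z` rather than the degree-zero term of the single complex. -/
def augmentation {Z : C} (I : InjectiveResolution Z) : Z ⟶ I.cocomplex.X 0 := I.ι.f 0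

lemma augmentation_comp_d {Z : C} (I : InjectiveResolution Z) :
    I.augmentation ≫ I.cocomplex.d 0 1 = 0 :=
  I.ι_f_zero_comp_complex_d

instance {Z : C} (I : InjectiveResolution Z) : Mono I.augmentation :=
  inferInstanceAs (Mono (I.ι.f 0))

section Splice

variable {F G : C} (η : F ⟶ G) (J : InjectiveResolution (cokernel η))

def spliceCocomplex : CochainComplex C ℕ :=
  J.cocomplex.augment (cokernel.π η ≫ J.augmentation)
    (by rw [Category.assoc, J.augmentation_comp_d, comp_zero])

lemma spliceCocomplex_d_zero_one :
    (spliceCocomplex η J).d 0 1 = cokernel.π η ≫ J.augmentation :=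
  CochainComplex.augment_d_zero_one _ _ _

lemma comp_spliceCocomplex_d_zero_one : η ≫ (spliceCocomplex η J).d 0 1 = 0 := by
  rw [spliceCocomplex_d_zero_one]
  exact (cokernel.condition_assoc η _).trans zero_comp

lemma spliceCocomplex_exactAt_succ : ∀ n, (spliceCocomplex η J).ExactAt (n + 1)
  | 0 => by
    rw [HomologicalComplex.exactAt_iff' _ 0 1 2 (by simp) (by simp)]
    let φ : (spliceCocomplex η J).sc' 0 1 2 ⟶ ShortComplex.mk _ _ J.augmentation_comp_d :=
      { τ₁ := cokernel.π η, τ₂ := 𝟙 _, τ₃ := 𝟙 _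
        comm₁₂ := (Category.comp_id _).symm
        comm₂₃ := (Category.id_comp _).trans (Category.comp_id _).symm }
    have : Epi φ.τ₁ := inferInstanceAs (Epi (cokernel.π η))
    have : IsIso φ.τ₂ := inferInstanceAs (IsIso (𝟙 _))
    have : Mono φ.τ₃ := inferInstanceAs (Mono (𝟙 _))
    exact (ShortComplex.exact_iff_of_epi_of_isIso_of_mono φ).2 J.exact₀
  | k + 1 => by
    rw [HomologicalComplex.exactAt_iff' _ (k + 1) (k + 2) (k + 3) (by simp) (by simp)]
    exact J.exact_succ k

lemma spliceCocomplex_exact₀ :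
    (ShortComplex.mk η ((spliceCocomplex η J).d 0 1)
      (comp_spliceCocomplex_d_zero_one η J)).Exact := by
  let φ : ShortComplex.mk η (cokernel.π η) (cokernel.condition η) ⟶
      ShortComplex.mk η ((spliceCocomplex η J).d 0 1) (comp_spliceCocomplex_d_zero_one η J) :=
    { τ₁ := 𝟙 _, τ₂ := 𝟙 _, τ₃ := J.augmentation
      comm₂₃ := (Category.id_comp _).trans (spliceCocomplex_d_zero_one η J) }
  have : Mono φ.τ₃ := inferInstanceAs (Mono J.augmentation)
  exact (ShortComplex.exact_iff_of_epi_of_isIso_of_mono φ).1 (ShortComplex.exact_cokernel η)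

def splice [Mono η] [Injective G] : InjectiveResolution F :=
  have : @Mono C _ F ((spliceCocomplex η J).X 0) η := ‹Mono η›
  ofExact (spliceCocomplex η J) (fun | 0 => ‹_› | k + 1 => J.injective k) η
    (comp_spliceCocomplex_d_zero_one η J) (spliceCocomplex_exact₀ η J)
    (spliceCocomplex_exactAt_succ η J)

end Splice

end CategoryTheory.InjectiveResolution

section CantorBendixson

variable {Y : Type*} [TopologicalSpace Y]

lemma exists_mem_nhds_inter_subset_singleton_of_notMem_cbDeriv {S : Set Y} (hS : IsClosed S)
    {x : Y} (hx : x ∉ cbDeriv S) : ∃ U ∈ nhds x, U ∩ S ⊆ {x} := by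
  by_cases hxS : x ∈ S
  · have hacc : ¬AccPt x (Filter.principal S) := fun h => hx ⟨hxS, h⟩
    rw [accPt_iff_nhds] at hacc
    push Not at hacc
    exact hacc
  · exact ⟨Sᶜ, hS.isOpen_compl.mem_nhds hxS, fun y hy => absurd hy.2 hy.1⟩

lemma isClosed_cbDeriv {S : Set Y} (hS : IsClosed S) : IsClosed (cbDeriv S) := by
  refine isOpen_compl_iff.1 (isOpen_iff_mem_nhds.2 fun x hx => ?_)
  obtain ⟨U, hU, hUS⟩ := exists_mem_nhds_inter_subset_singleton_of_notMem_cbDeriv hS hx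
  filter_upwards [hU] with y hyU hy
  exact hx (hUS ⟨hyU, hy.1⟩ ▸ hy)

end CantorBendixson

namespace CategoryTheory.Limits

lemma Pi.mono_π_of_isZero {β C : Type*} [Category C] [HasZeroMorphisms C] (f : β → C)
    [HasProduct f] (b : β) (h : ∀ b' ≠ b, IsZero (f b')) : Mono (Pi.π f b) where
  right_cancellation g g' hg := Pi.hom_ext _ _ fun b' => by
    obtain rfl | hb' := eq_or_ne b' b
    exacts [hg, (h b' hb').eq_of_tgt _ _]

lemma Pi.mono_map_π_of_isZero {β C D : Type*} [Category C] [Category D] [HasZeroMorphisms D]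
    (Φ : C ⥤ D) (f : β → C) [HasProduct f] [HasProduct fun b => Φ.obj (f b)]
    [PreservesLimit (Discrete.functor f) Φ] (b : β) (h : ∀ b' ≠ b, IsZero (Φ.obj (f b'))) :
    Mono (Φ.map (Pi.π f b)) := by
  have := Pi.mono_π_of_isZero _ b h
  rw [← piComparison_comp_π]
  infer_instance

end CategoryTheory.Limits

namespace TopCat

open Presheaf

variable {X : TopCat.{0}}

lemma Presheaf.stalkFunctor_map_injective_of_app_injective_of_le {C : Type*} [Category.{0} C]
    [HasColimits C] {FC : C → C → Type*} {CC : C → Type}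
    [∀ X Y, FunLike (FC X Y) (CC X) (CC Y)] [ConcreteCategory C FC] [PreservesFilteredColimits (forget C)]
    {F G : Presheaf C X} {f : F ⟶ G} {U : Opens X} {x : X} (hx : x ∈ U)
    (h : ∀ V ≤ U, Function.Injective (f.app (op V))) :
    Function.Injective ((stalkFunctor C x).map f) := fun s t hst => by
  obtain ⟨U₁, hU₁, hxU₁, s, rfl⟩ := F.exists_le_germ_eq s hx
  obtain ⟨U₂, -, hxU₂, t, rfl⟩ := F.exists_le_germ_eq t hx
  rw [stalkFunctor_map_germ_apply, stalkFunctor_map_germ_apply] at hst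
  obtain ⟨W, hxW, iWU₁, iWU₂, heq⟩ := G.germ_eq x hxU₁ hxU₂ _ _ hst
  rw [← ConcreteCategory.comp_apply, ← ConcreteCategory.comp_apply, ← f.naturality,
    ← f.naturality, ConcreteCategory.comp_apply, ConcreteCategory.comp_apply] at heq
  replace heq := h W ((leOfHom iWU₁).trans hU₁) heq
  rw [← F.germ_res_apply iWU₁ x hxW s, ← F.germ_res_apply iWU₂ x hxW t, heq]

end TopCat

instance ModuleCat.injective_of_isSemisimpleRing {R : Type*} [Ring R] [IsSemisimpleRing R]
    (M : ModuleCat R) : Injective M :=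
  have := Module.injective_of_isSemisimpleRing R M
  Module.injective_object_of_injective_module R M

namespace TopCat.Sheaf

open Presheaf

variable {R : Type} [Ring R] {X : TopCat.{0}}

lemma isZero_skyscraperSheaf_obj {C : Type*} [Category.{0} C] [HasTerminal C]
    [HasZeroMorphisms C] {y : X} {M : C} {V : Opens X} (h : y ∈ V → IsZero M) :
    IsZero ((skyscraperSheaf y M).obj.obj (op V)) := by
  by_cases hy : y ∈ V
  · simpa [hy] using h hy
  · exact (isTerminalSkyscraperSheafObjObjOfNotMem hy).isZero

abbrev godement (F : TopCat.Sheaf (ModuleCat.{0} R) X) : TopCat.Sheaf (ModuleCat.{0} R) X :=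
  ∏ᶜ fun x : X => (skyscraperSheafFunctor x).obj ((Sheaf.forget _ X ⋙ stalkFunctor _ x).obj F)

instance [IsSemisimpleRing R] (F : TopCat.Sheaf (ModuleCat.{0} R) X) : Injective (godement F) :=
  have (x : X) := Injective.injective_of_adjoint (stalkSkyscraperSheafAdjunction x)
    ((Sheaf.forget _ X ⋙ stalkFunctor _ x).obj F)
  inferInstanceAs (Injective (∏ᶜ _))

def toGodement (F : TopCat.Sheaf (ModuleCat.{0} R) X) : F ⟶ godement F :=
  Pi.lift fun x => (stalkSkyscraperSheafAdjunction x).unit.app F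

lemma toGodement_π (F : TopCat.Sheaf (ModuleCat.{0} R) X) (x : X) :
    toGodement F ≫ Pi.π _ x = (stalkSkyscraperSheafAdjunction x).unit.app F :=
  Pi.lift_π _ _

def stalkToGodementSplitMono (F : TopCat.Sheaf (ModuleCat.{0} R) X) (x : X) :
    SplitMono ((Sheaf.forget _ X ⋙ stalkFunctor _ x).map (toGodement F)) where
  retraction := (Sheaf.forget _ X ⋙ stalkFunctor _ x).map (Pi.π _ x) ≫
    (stalkSkyscraperSheafAdjunction x).counit.app _
  id := by
    rw [← Category.assoc, ← Functor.map_comp, toGodement_π]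
    exact (stalkSkyscraperSheafAdjunction x).left_triangle_components F

instance (F : TopCat.Sheaf (ModuleCat.{0} R) X) : Mono (toGodement F) :=
  have (x : X) : Mono ((stalkFunctor _ x).map (toGodement F).hom) :=
    (stalkToGodementSplitMono F x).mono
  mono_of_stalk_mono _

variable {F : TopCat.Sheaf (ModuleCat.{0} R) X} {U : Opens X} {x : X}

lemma mono_app_π_godement (hU : ∀ y ∈ U, y ≠ x → IsZero (F.presheaf.stalk y)) {V : Opens X}
    (hV : V ≤ U) :
    Mono ((Pi.π (fun y => (skyscraperSheafFunctor y).obj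
        ((Sheaf.forget _ X ⋙ stalkFunctor _ y).obj F)) x).hom.app (op V)) :=
  Pi.mono_map_π_of_isZero (sheafToPresheaf _ _ ⋙ (evaluation _ _).obj (op V)) _ x
    fun y hy => isZero_skyscraperSheaf_obj fun hyV => hU y (hV hyV) hy

lemma isIso_stalkFunctor_map_toGodement (hx : x ∈ U)
    (hU : ∀ y ∈ U, y ≠ x → IsZero (F.presheaf.stalk y)) :
    IsIso ((Sheaf.forget _ X ⋙ stalkFunctor _ x).map (toGodement F)) := by
  have : Mono ((Sheaf.forget _ X ⋙ stalkFunctor _ x).map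
      (Pi.π (fun y => (skyscraperSheafFunctor y).obj
        ((Sheaf.forget _ X ⋙ stalkFunctor _ y).obj F)) x)) :=
    ConcreteCategory.mono_of_injective _ <|
      Presheaf.stalkFunctor_map_injective_of_app_injective_of_le hx fun _ hV =>
        (ModuleCat.mono_iff_injective _).1 (mono_app_π_godement hU hV)
  have : Mono ((stalkSkyscraperSheafAdjunction x).counit.app
      ((Sheaf.forget _ X ⋙ stalkFunctor _ x).obj F)) :=
    inferInstanceAs (Mono (skyscraperPresheafStalkOfSpecializes x _ specializes_rfl).hom)
  have : Mono (stalkToGodementSplitMono F x).retraction := mono_comp _ _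
  exact IsIso.of_mono_retraction' (stalkToGodementSplitMono F x)

lemma isZero_stalk_cokernel_toGodement (hx : x ∈ U)
    (hU : ∀ y ∈ U, y ≠ x → IsZero (F.presheaf.stalk y)) :
    IsZero ((cokernel (toGodement F)).presheaf.stalk x) :=
  have := isIso_stalkFunctor_map_toGodement hx hU
  (isZero_cokernel_of_epi _).of_iso
    (PreservesCokernel.iso (Sheaf.forget _ X ⋙ stalkFunctor _ x) (toGodement F))

lemma isZero_stalk_cokernel_toGodement_of_notMem_cbDeriv {S : Set X} (hS : IsClosed S)
    (hF : ∀ y ∉ S, IsZero (F.presheaf.stalk y)) (hx : x ∉ cbDeriv S) :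
    IsZero ((cokernel (toGodement F)).presheaf.stalk x) := by
  obtain ⟨N, hN, hNS⟩ := exists_mem_nhds_inter_subset_singleton_of_notMem_cbDeriv hS hx
  obtain ⟨V, hVN, hV, hxV⟩ := mem_nhds_iff.1 hN
  exact isZero_stalk_cokernel_toGodement (U := ⟨V, hV⟩) hxV fun y hy hyx =>
    hF y fun hyS => hyx (hNS ⟨hVN hy, hyS⟩)

theorem exists_injectiveResolution_of_cbDeriv_iterate_eq_empty [IsSemisimpleRing R]
    (d : ℕ) {S : Set X} (hS : IsClosed S) (hd : cbDeriv^[d] S = ∅)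
    (F : TopCat.Sheaf (ModuleCat.{0} R) X) (hF : ∀ x ∉ S, IsZero (F.presheaf.stalk x)) :
    ∃ I : InjectiveResolution F, ∀ k, d ≤ k → IsZero (I.cocomplex.X k) := by
  induction d generalizing S F with
  | zero =>
    have hF₀ : IsZero F := (isZero_iff_stalkFunctor_obj_isZero F).2 fun x =>
      hF x fun hx => Set.notMem_empty x (hd.subset hx)
    have := hF₀.injective
    exact ⟨InjectiveResolution.self F, fun k _ =>
      (HomologicalComplex.eval _ _ k).map_isZero ((CochainComplex.single₀ _).map_isZero hF₀)⟩
  | succ d ih =>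
    obtain ⟨J, hJ⟩ := ih (isClosed_cbDeriv hS) hd (cokernel (toGodement F)) fun x hx =>
      isZero_stalk_cokernel_toGodement_of_notMem_cbDeriv hS hF hx
    exact ⟨InjectiveResolution.splice (toGodement F) J, fun
      | 0, hk => absurd hk (Nat.not_succ_le_zero d)
      | k + 1, hk => hJ k (Nat.le_of_succ_le_succ hk)⟩

end TopCat.Sheaf

theorem stmt9_general (X : TopCat.{0}) (n : ℕ)
    (hrank : cbIter X n = ∅)
    (F : SheafQ X) :
    ∃ I : InjectiveResolution F, ∀ k : ℕ, n ≤ k → IsZero (I.cocomplex.X k) :=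
  TopCat.Sheaf.exists_injectiveResolution_of_cbDeriv_iterate_eq_empty n isClosed_univ hrank F
    fun x hx => absurd (Set.mem_univ x) hx

/-- Let `X` be a Hausdorff scattered space of finite Cantor–Bendixson rank
`n`, i.e. `X^(n) = ∅` and `X^(j) ≠ ∅` for `j < n`.  Then every sheaf of `ℚ`-modules on `X`
admits an injective resolution of length at most `n - 1`: an injective resolution whose
terms in all degrees `k ≥ n` vanish.  In particular the injective dimension of the abelian
category of sheaves of `ℚ`-modules on `X` is at most `n - 1`. -/
theorem stmt9 (X : TopCat.{0}) [T2Space X] (n : ℕ)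
    (hrank : cbIter X n = ∅) (hleast : ∀ j < n, cbIter X j ≠ ∅)
    (F : SheafQ X) :
    ∃ I : InjectiveResolution F, ∀ k : ℕ, n ≤ k → IsZero (I.cocomplex.X k) :=
  stmt9_general X n hrank F

end
end
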